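/- Let r₁, r₂, r₃, r₄ ∈ ℂ with r₄ = -r₁ - r₂ - r₃, all nonzero, and suppose r₂ + r₃ ≠ 0. Consider the meromorphic function v(z) = r₁/(z-p) + r₂/z + r₃/(z-1) on ℂ. Then v, viewed as a rational function of z, has a double zero (i.e., the numerator polynomial of v has a repeated root) if and only if p satisfies p = -(r₁r₃ + r₂r₄ ± 2√(r₁r₂r₃r₄))/(r₂+r₃)². -/

import Mathlib

/-- For residues r₁,…,r₄ with r₄ = -r₁-r₂-r₃, all nonzero and r₂+r₃ ≠ 0,
the form v(z) = r₁/(z-p) + r₂/z + r₃/(z-1) has a double zero (its numerator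
quadratic has a repeated root) iff p = -(r₁r₃ + r₂r₄ ± 2√(r₁r₂r₃r₄))/(r₂+r₃)². -/
theorem tau_stmt0 (r₁ r₂ r₃ r₄ p : ℂ)
    (h₄ : r₄ = -r₁ - r₂ - r₃)
    (h1 : r₁ ≠ 0) (h2 : r₂ ≠ 0) (h3 : r₃ ≠ 0) (h4 : r₄ ≠ 0)
    (h23 : r₂ + r₃ ≠ 0) :
    (∃ z₀ : ℂ, ∀ z : ℂ,
        r₁ * z * (z - 1) + r₂ * (z - p) * (z - 1) + r₃ * (z - p) * z
          = (r₁ + r₂ + r₃) * (z - z₀) ^ 2)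
      ↔ (∃ s : ℂ, s ^ 2 = r₁ * r₂ * r₃ * r₄ ∧
          p = -(r₁ * r₃ + r₂ * r₄ + 2 * s) / (r₂ + r₃) ^ 2) := by
  subst h₄
  have ha : r₁ + r₂ + r₃ ≠ 0 := by
    intro h; apply h4; linear_combination -h
  have key : (∃ z₀ : ℂ, ∀ z : ℂ,
        r₁ * z * (z - 1) + r₂ * (z - p) * (z - 1) + r₃ * (z - p) * z
          = (r₁ + r₂ + r₃) * (z - z₀) ^ 2)
      ↔ (r₁ + r₂ + (r₂ + r₃) * p) ^ 2 = 4 * (r₁ + r₂ + r₃) * (r₂ * p) := by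
    constructor
    · rintro ⟨z₀, h⟩
      have hb : r₁ + r₂ + (r₂ + r₃) * p = 2 * (r₁ + r₂ + r₃) * z₀ := by
        linear_combination (h 0) - (h 1)
      linear_combination ((r₁ + r₂ + (r₂ + r₃) * p) + 2 * (r₁ + r₂ + r₃) * z₀) * hb
        - 4 * (r₁ + r₂ + r₃) * (h 0)
    · intro hd
      refine ⟨(r₁ + r₂ + (r₂ + r₃) * p) / (2 * (r₁ + r₂ + r₃)), fun z => ?_⟩
      field_simp
      linear_combination (-1) * hd
  rw [key]
  constructor
  · intro hd
    refine ⟨-(p * (r₂ + r₃) ^ 2 + r₁ * r₃ + r₂ * (-r₁ - r₂ - r₃)) / 2, ?_, ?_⟩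
    · field_simp
      linear_combination (r₂ + r₃) ^ 2 * hd
    · field_simp
      ring
  · rintro ⟨s, hs, hp⟩
    subst hp
    field_simp
    linear_combination 4 * hs
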